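/- arXiv:1912.02820 — 2 statements merged into one kernel-verified Lean document; each statement's English description precedes it below -/
import Mathlib

section
/- Let f = g·h where g(z) = ∏_{α ∈ C}(z−α) for a finite multiset C of size k ≥ 1 contained in the disc D(m_C, r_C) centered at the centroid m_C of C, and h is analytic with no roots among C. If z ∈ ℂ satisfies 4k(|z−m_C| + r_C)·γ(h,z) ≤ 1, then 1/2 < |f_k(z)/h(z)| < 3/2, where f_k(z) = f^{(k)}(z)/k!. -/
/-!
Expanding `∏ (w - α) = ∏ ((w - z) + (z - α))` shows that its Taylor coefficients at `z` are the
elementary symmetric functions `e_j` of the `z - α`, so by Leibniz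
`f_k(z) / h(z) = ∑ j, e_j · h^{(j)}(z) / (j! h(z))` with leading term `e_0 = 1`.
With `R = |z - m_C| + r_C` we have `|e_j| ≤ (k R)^j` and `|h^{(j)}(z) / (j! h(z))| ≤ γ^j`, so the
term of index `j ≥ 1` is at most `4^{-j}` and `f_k(z) / h(z)` lies within `1/3` of `1`.
-/

open Complex Metric

def gammaSet (h : ℂ → ℂ) (z : ℂ) : Set ℝ :=
  {x | ∃ k : ℕ, 1 ≤ k ∧ x = ‖iteratedDeriv k h z / ((k.factorial : ℂ) * h z)‖ ^ ((1 : ℝ) / k)}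

open Polynomial Finset
open scoped Nat

section PolynomialFactor

variable {𝕜 : Type*} [NontriviallyNormedField 𝕜]

theorem iteratedDeriv_polynomial_eval (p : 𝕜[X]) (n : ℕ) :
    iteratedDeriv n (fun w => p.eval w) = fun w => (derivative^[n] p).eval w := by
  induction n with
  | zero => simp
  | succ n ih =>
    funext w
    rw [iteratedDeriv_succ, ih, Function.iterate_succ_apply']
    exact Polynomial.deriv _

theorem iteratedDeriv_polynomial_eval_eq_factorial_mul_taylor_coeff (p : 𝕜[X]) (n : ℕ) (z : 𝕜) :
    iteratedDeriv n (fun w => p.eval w) z = n ! * (taylor z p).coeff n := by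
  rw [iteratedDeriv_polynomial_eval, taylor_coeff, ← factorial_smul_hasseDeriv]
  simp

theorem taylor_multiset_prod_X_sub_C_coeff {R : Type*} [CommRing R] (C : Multiset R) (z : R)
    {i : ℕ} (hi : i ≤ Multiset.card C) :
    (taylor z (C.map (fun α => X - Polynomial.C α)).prod).coeff i =
      (C.map (fun α => z - α)).esymm (Multiset.card C - i) := by
  have htaylor : taylor z (C.map (fun α => X - Polynomial.C α)).prod =
      ((C.map (fun α => z - α)).map (fun r => X + Polynomial.C r)).prod := by
    rw [← taylorAlgHom_apply, map_multiset_prod, Multiset.map_map, Multiset.map_map]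
    refine congrArg _ (Multiset.map_congr rfl fun α _ => ?_)
    simp only [Function.comp_apply, taylorAlgHom_apply, map_sub, taylor_X, taylor_C]
    ring
  rw [htaylor, Multiset.prod_X_add_C_coeff _ (by simpa using hi), Multiset.card_map]

theorem multiset_prod_sub_eq_eval (C : Multiset 𝕜) :
    (fun w => (C.map (fun α => w - α)).prod) =
      fun w => ((C.map (fun α => X - Polynomial.C α)).prod).eval w := by
  funext w
  simp [eval_multiset_prod, Multiset.map_map]

theorem iteratedDeriv_multiset_prod_sub (C : Multiset 𝕜) (z : 𝕜) {i : ℕ}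
    (hi : i ≤ Multiset.card C) :
    iteratedDeriv i (fun w => (C.map (fun α => w - α)).prod) z =
      i ! * (C.map (fun α => z - α)).esymm (Multiset.card C - i) := by
  rw [multiset_prod_sub_eq_eval, iteratedDeriv_polynomial_eval_eq_factorial_mul_taylor_coeff,
    taylor_multiset_prod_X_sub_C_coeff C z hi]

theorem contDiff_multiset_prod_sub (C : Multiset 𝕜) {n : WithTop ℕ∞} :
    ContDiff 𝕜 n fun w => (C.map (fun α => w - α)).prod := by
  rw [multiset_prod_sub_eq_eval]
  simpa only [coe_aeval_eq_eval] using
    contDiff_aeval (R := 𝕜) (𝕜 := 𝕜) (C.map (fun α => X - Polynomial.C α)).prod n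

theorem iteratedDeriv_multiset_prod_sub_mul_div_factorial [CharZero 𝕜] (C : Multiset 𝕜)
    {h : 𝕜 → 𝕜} {z : 𝕜} (hh : ContDiffAt 𝕜 (Multiset.card C) h z) :
    iteratedDeriv (Multiset.card C) (fun w => (C.map (fun α => w - α)).prod * h w) z /
        (Multiset.card C)! =
      ∑ j ∈ range (Multiset.card C + 1),
        (C.map (fun α => z - α)).esymm j * (iteratedDeriv j h z / j !) := by
  set k := Multiset.card C
  rw [iteratedDeriv_fun_mul (contDiff_multiset_prod_sub C).contDiffAt hh, sum_div,
    ← sum_range_reflect]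
  refine sum_congr rfl fun i hi => ?_
  have hik : i ≤ k := Nat.lt_succ_iff.mp (mem_range.mp hi)
  rw [show k + 1 - 1 - i = k - i by omega, Nat.sub_sub_self hik,
    iteratedDeriv_multiset_prod_sub C z (Nat.sub_le k i), Nat.sub_sub_self hik]
  have hfact : (k.choose (k - i) * (k - i)! * i ! : 𝕜) = k ! := by
    have := Nat.choose_mul_factorial_mul_factorial (Nat.sub_le k i)
    rw [Nat.sub_sub_self hik] at this
    exact_mod_cast this
  have hi_fact : (i ! : 𝕜) ≠ 0 := Nat.cast_ne_zero.mpr i.factorial_ne_zero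
  have hk_fact : (k ! : 𝕜) ≠ 0 := Nat.cast_ne_zero.mpr k.factorial_ne_zero
  field_simp
  linear_combination ((C.map (fun α => z - α)).esymm i * iteratedDeriv i h z) * hfact

end PolynomialFactor

theorem norm_multiset_prod_le_pow_card {E : Type*} [SeminormedCommRing E] [NormOneClass E]
    {s : Multiset E} {R : ℝ} (hs : ∀ x ∈ s, ‖x‖ ≤ R) :
    ‖s.prod‖ ≤ R ^ Multiset.card s := by
  induction s using Multiset.induction with
  | empty => simp
  | cons a s ih =>
    rw [Multiset.prod_cons, Multiset.card_cons, pow_succ']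
    have ha := hs a (Multiset.mem_cons_self a s)
    calc ‖a * s.prod‖ ≤ ‖a‖ * ‖s.prod‖ := norm_mul_le _ _
      _ ≤ R * R ^ Multiset.card s :=
        mul_le_mul ha (ih fun x hx => hs x (Multiset.mem_cons_of_mem hx)) (norm_nonneg _)
          ((norm_nonneg a).trans ha)

theorem norm_esymm_le {E : Type*} [SeminormedCommRing E] [NormOneClass E]
    {s : Multiset E} {R : ℝ} (hs : ∀ x ∈ s, ‖x‖ ≤ R) (j : ℕ) :
    ‖s.esymm j‖ ≤ (Multiset.card s).choose j * R ^ j := by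
  calc ‖s.esymm j‖ ≤ (((s.powersetCard j).map Multiset.prod).map norm).sum :=
        norm_multiset_sum_le _
    _ ≤ ((s.powersetCard j).map fun _ => R ^ j).sum := by
        rw [Multiset.map_map]
        refine Multiset.sum_map_le_sum_map _ _ fun t ht => ?_
        obtain ⟨hts, htj⟩ := Multiset.mem_powersetCard.mp ht
        rw [← htj]
        exact norm_multiset_prod_le_pow_card fun x hx => hs x (Multiset.mem_of_le hts hx)
    _ = (Multiset.card s).choose j * R ^ j := by
        simp [Multiset.map_const', Multiset.card_powersetCard]

theorem norm_iteratedDeriv_div_le_pow {h : ℂ → ℂ} {z : ℂ} {γ : ℝ}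
    (hγ : γ ∈ upperBounds (gammaSet h z)) {j : ℕ} (hj : 1 ≤ j) :
    ‖iteratedDeriv j h z / (j ! * h z)‖ ≤ γ ^ j := by
  set x := ‖iteratedDeriv j h z / (j ! * h z)‖
  have hroot : x ^ ((j : ℝ)⁻¹) ≤ γ := hγ ⟨j, hj, by rw [one_div]⟩
  calc x = (x ^ ((j : ℝ)⁻¹)) ^ j := (Real.rpow_inv_natCast_pow (norm_nonneg _) (by omega)).symm
    _ ≤ γ ^ j := pow_le_pow_left₀ (by positivity) hroot j

theorem norm_sum_esymm_mul_sub_one_le {E : Type*} [SeminormedCommRing E] [NormOneClass E]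
    {s : Multiset E} {R γ : ℝ} {b : ℕ → E}
    (hs : ∀ x ∈ s, ‖x‖ ≤ R) (hb₀ : b 0 = 1) (hb : ∀ j, 1 ≤ j → ‖b j‖ ≤ γ ^ j)
    (hsmall : 4 * Multiset.card s * R * γ ≤ 1) :
    ‖∑ j ∈ range (Multiset.card s + 1), s.esymm j * b j - 1‖ ≤ 1 / 3 := by
  have he₀ : s.esymm 0 = 1 := by simp [Multiset.esymm]
  rw [sum_range_succ', he₀, hb₀, one_mul, add_sub_cancel_right]
  obtain rfl | ⟨x, hx⟩ := s.empty_or_exists_mem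
  · simp
  set k := Multiset.card s
  have hR : 0 ≤ R := (norm_nonneg x).trans (hs x hx)
  have hγ : 0 ≤ γ := (norm_nonneg _).trans (by simpa using hb 1 le_rfl)
  set ρ := k * R * γ
  have hρ : 0 ≤ ρ := by positivity
  have hρ4 : ρ ≤ 1 / 4 := by linarith
  have hterm : ∀ j, ‖s.esymm (j + 1) * b (j + 1)‖ ≤ ρ ^ (j + 1) := fun j => calc
    ‖s.esymm (j + 1) * b (j + 1)‖ ≤ ‖s.esymm (j + 1)‖ * ‖b (j + 1)‖ := norm_mul_le _ _
    _ ≤ (k.choose (j + 1) * R ^ (j + 1)) * γ ^ (j + 1) :=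
        mul_le_mul (norm_esymm_le hs _) (hb _ (by omega)) (norm_nonneg _) (by positivity)
    _ ≤ (k ^ (j + 1) * R ^ (j + 1)) * γ ^ (j + 1) := by
        gcongr; exact_mod_cast Nat.choose_le_pow k (j + 1)
    _ = ρ ^ (j + 1) := by rw [mul_pow, mul_pow]
  calc ‖∑ j ∈ range k, s.esymm (j + 1) * b (j + 1)‖
      ≤ ∑ j ∈ range k, ρ ^ (j + 1) := norm_sum_le_of_le _ fun j _ => hterm j
    _ = ρ * ∑ j ∈ Ico 0 k, ρ ^ j := by simp [pow_succ', mul_sum]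
    _ ≤ ρ * (ρ ^ 0 / (1 - ρ)) := by gcongr; exact geom_sum_Ico_le_of_lt_one hρ (by linarith)
    _ ≤ 1 / 3 := by
        rw [pow_zero, mul_one_div, div_le_iff₀ (by linarith)]
        linarith

theorem stmt2_general (C : Multiset ℂ) (k : ℕ) (hcard : Multiset.card C = k)
    (mC : ℂ)
    (rC : ℝ) (hrC : ∀ α ∈ C, ‖α - mC‖ ≤ rC)
    (h f : ℂ → ℂ) (hdiff : Differentiable ℂ h)
    (hf : ∀ w, f w = (C.map (fun α => w - α)).prod * h w)
    (z : ℂ) (hz : h z ≠ 0) (γ : ℝ) (hγ : IsLUB (gammaSet h z) γ)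
    (hcond : 4 * k * (‖z - mC‖ + rC) * γ ≤ 1) :
    1/2 < ‖(iteratedDeriv k f z / (k.factorial : ℂ)) / h z‖ ∧
      ‖(iteratedDeriv k f z / (k.factorial : ℂ)) / h z‖ < 3/2 := by
  subst hcard
  obtain rfl : f = fun w => (C.map (fun α => w - α)).prod * h w := funext hf
  have hs : ∀ x ∈ C.map (fun α => z - α), ‖x‖ ≤ ‖z - mC‖ + rC := by
    refine Multiset.forall_mem_map_iff.mpr fun α hα => ?_
    calc ‖z - α‖ ≤ ‖z - mC‖ + ‖mC - α‖ := norm_sub_le_norm_sub_add_norm_sub ..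
      _ ≤ ‖z - mC‖ + rC := by rw [norm_sub_rev mC α]; gcongr; exact hrC α hα
  have hexpand : iteratedDeriv (Multiset.card C) (fun w => (C.map (fun α => w - α)).prod * h w) z
      / (Multiset.card C)! / h z = ∑ j ∈ range (Multiset.card (C.map (fun α => z - α)) + 1),
        (C.map (fun α => z - α)).esymm j * (iteratedDeriv j h z / (j ! * h z)) := by
    rw [iteratedDeriv_multiset_prod_sub_mul_div_factorial C hdiff.contDiff.contDiffAt, sum_div,
      Multiset.card_map]
    simp only [mul_div_assoc, div_div]
  have hT := norm_sum_esymm_mul_sub_one_le hs (b := fun j => iteratedDeriv j h z / (j ! * h z))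
    (by simp [hz]) (fun j hj => norm_iteratedDeriv_div_le_pow hγ.1 hj) (by simpa using hcond)
  rw [← hexpand] at hT
  obtain ⟨hlower, hupper⟩ := abs_le.mp ((abs_norm_sub_norm_le _ 1).trans hT)
  rw [norm_one] at hlower hupper
  exact ⟨by linarith, by linarith⟩

theorem stmt2 (C : Multiset ℂ) (k : ℕ) (hk : 1 ≤ k) (hcard : Multiset.card C = k)
    (mC : ℂ) (hmC : mC = C.sum / (k : ℂ))
    (rC : ℝ) (hrC : ∀ α ∈ C, ‖α - mC‖ ≤ rC)
    (h f : ℂ → ℂ) (hdiff : Differentiable ℂ h) (hroots : ∀ α ∈ C, h α ≠ 0)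
    (hf : ∀ w, f w = (C.map (fun α => w - α)).prod * h w)
    (z : ℂ) (hz : h z ≠ 0) (γ : ℝ) (hγ : IsLUB (gammaSet h z) γ)
    (hcond : 4 * k * (‖z - mC‖ + rC) * γ ≤ 1) :
    1/2 < ‖(iteratedDeriv k f z / (k.factorial : ℂ)) / h z‖ ∧
      ‖(iteratedDeriv k f z / (k.factorial : ℂ)) / h z‖ < 3/2 :=
  stmt2_general C k hcard mC rC hrC h f hdiff hf z hz γ hγ hcond
end

section
/- Let f be holomorphic on a neighborhood of the disc D(m, 2r) with f(m) ≠ 0, and suppose there exists z ∈ D(m,r) with 2^7 · γ(f,z) · r ≤ 1, where γ(f,z) = sup_{k≥1}|f^{(k)}(z)/(k! f(z))|^{1/k}. Then |f(m)| ≥ 6·r·sup_{w ∈ D(m,2r)} |f'(w)|. In particular f has no zero in D(m,r). -/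
/-!
The bound `γ(f, z) ≤ γ` says exactly that the Taylor coefficients of `f` at `z` satisfy
`‖f⁽ⁿ⁾(z) / n!‖ ≤ ‖f z‖ γⁿ`. Since `4rγ ≤ 1/32`, the Taylor series at `z` converges on
`ball z (4r)` and stays within `‖f z‖ / 31` of `f z` there. By the identity theorem it agrees with
`f` near `closedBall m (2r) ⊆ ball z (3r)`, so on that disc `f` is within `‖f z‖ / 31` of `f z`,
and Cauchy's estimate on circles of radius `r` gives `‖f'‖ ≤ ‖f z‖ / (31 r)`. Hence
`6 r sup ‖f'‖ ≤ (6/31) ‖f z‖ ≤ (30/31) ‖f z‖ ≤ ‖f m‖`.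
-/

open Complex Metric

open FormalMultilinearSeries Set
open scoped Nat Topology

section GeometricCoefficients

variable {c : ℕ → ℂ} {C a : ℝ}

theorem nonneg_of_norm_le_mul_pow (hc : ∀ n, ‖c n‖ ≤ C * a ^ n) : 0 ≤ C :=
  (norm_nonneg _).trans (by simpa using hc 0)

theorem ofReal_le_radius_ofScalars (hc : ∀ n, ‖c n‖ ≤ C * a ^ n) (ha : 0 ≤ a) {ρ : ℝ}
    (hρ : 0 ≤ ρ) (hρa : ρ * a ≤ 1) : ENNReal.ofReal ρ ≤ (ofScalars ℂ c).radius := by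
  lift ρ to NNReal using hρ
  rw [ENNReal.ofReal_coe_nnreal]
  refine le_radius_of_bound _ C fun n => ?_
  have hC := nonneg_of_norm_le_mul_pow hc
  calc ‖ofScalars ℂ c n‖ * ρ ^ n = ‖c n‖ * ρ ^ n := by rw [ofScalars_norm]
    _ ≤ C * a ^ n * ρ ^ n := by gcongr; exact hc n
    _ = C * (ρ * a) ^ n := by ring
    _ ≤ C := mul_le_of_le_one_right hC (pow_le_one₀ (by positivity) hρa)

theorem analyticOnNhd_ofScalarsSum_sub (hc : ∀ n, ‖c n‖ ≤ C * a ^ n) (ha : 0 ≤ a) {ρ : ℝ}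
    (hρ : 0 < ρ) (hρa : ρ * a ≤ 1) (z : ℂ) :
    AnalyticOnNhd ℂ (fun x => ofScalarsSum c (x - z)) (ball z ρ) := by
  have hrad := ofReal_le_radius_ofScalars hc ha hρ.le hρa
  have hp := (ofScalars ℂ c).hasFPowerSeriesOnBall ((ENNReal.ofReal_pos.2 hρ).trans_le hrad)
  intro x hx
  have hxz : x - z ∈ eball (0 : ℂ) (ofScalars ℂ c).radius := by
    refine lt_of_lt_of_le ?_ hrad
    rw [edist_zero_right, ← ofReal_norm]
    exact ENNReal.ofReal_lt_ofReal_iff_of_nonneg (norm_nonneg _) |>.2 (mem_ball_iff_norm.1 hx)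
  exact (hp.analyticAt_of_mem hxz).comp (f := fun y => y - z) (by fun_prop)

theorem norm_ofScalarsSum_sub_coeff_zero_le (hc : ∀ n, ‖c n‖ ≤ C * a ^ n) (ha : 0 ≤ a)
    {x : ℂ} {q : ℝ} (hq : ‖x‖ * a ≤ q) (hq1 : q < 1) :
    ‖ofScalarsSum c x - c 0‖ ≤ C * (q / (1 - q)) := by
  have hC := nonneg_of_norm_le_mul_pow hc
  have hq0 : 0 ≤ q := (by positivity : 0 ≤ ‖x‖ * a).trans hq
  have hgeom : HasSum (fun n => C * q * q ^ n) (C * q * (1 - q)⁻¹) :=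
    (hasSum_geometric_of_lt_one hq0 hq1).mul_left _
  have hterm : ∀ n, ‖c (n + 1) * x ^ (n + 1)‖ ≤ C * q * q ^ n := fun n =>
    calc ‖c (n + 1) * x ^ (n + 1)‖ ≤ C * a ^ (n + 1) * ‖x‖ ^ (n + 1) := by
          rw [norm_mul, norm_pow]; gcongr; exact hc _
      _ = C * (‖x‖ * a) ^ (n + 1) := by ring
      _ ≤ C * q * q ^ n := by rw [mul_assoc, ← pow_succ']; gcongr
  have hsum : Summable fun n => c n * x ^ n :=
    (summable_nat_add_iff 1).1 (hgeom.summable.of_norm_bounded hterm)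
  rw [ofScalars_sum_eq]
  simp only [smul_eq_mul]
  rw [hsum.tsum_eq_zero_add, pow_zero, mul_one, add_sub_cancel_left]
  calc ‖∑' n, c (n + 1) * x ^ (n + 1)‖ ≤ C * q * (1 - q)⁻¹ := tsum_of_norm_bounded hgeom hterm
    _ = C * (q / (1 - q)) := by ring

end GeometricCoefficients

theorem exists_ball_subset_of_closedBall_subset {E : Type*} [NormedAddCommGroup E]
    [NormedSpace ℝ E] [ProperSpace E] {U : Set E} (hU : IsOpen U) {m : E} {R : ℝ} (hR : 0 ≤ R)
    (h : closedBall m R ⊆ U) : ∃ ε > 0, ball m (R + ε) ⊆ U := by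
  obtain ⟨ε, hε, hεU⟩ := (isCompact_closedBall m R).exists_thickening_subset_open hU h
  exact ⟨ε, hε, by rwa [thickening_closedBall hε hR, add_comm] at hεU⟩

theorem Complex.norm_deriv_le_of_forall_norm_sub_le {g : ℂ → ℂ} {s : Set ℂ} {w b : ℂ}
    {δ B : ℝ} (hg : DifferentiableOn ℂ g s) (hδ : 0 < δ) (hws : closedBall w δ ⊆ s)
    (hB : ∀ x ∈ s, ‖g x - b‖ ≤ B) : ‖deriv g w‖ ≤ B / δ := by
  rw [← deriv_sub_const b]
  exact norm_deriv_le_of_forall_mem_sphere_norm_le hδ ((hg.sub_const b).diffContOnCl_ball hws)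
    fun x hx => hB x (hws (sphere_subset_closedBall hx))

noncomputable def taylorCoeff (f : ℂ → ℂ) (z : ℂ) (n : ℕ) : ℂ :=
  (n ! : ℂ)⁻¹ * iteratedDeriv n f z

theorem taylorCoeff_zero (f : ℂ → ℂ) (z : ℂ) : taylorCoeff f z 0 = f z := by
  simp [taylorCoeff]

theorem DifferentiableOn.eqOn_ofScalarsSum_taylorCoeff {f : ℂ → ℂ} {V : Set ℂ} {z : ℂ}
    {C a ρ : ℝ} (hf : DifferentiableOn ℂ f V) (hV : IsOpen V) (hVc : Convex ℝ V) (hz : z ∈ V)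
    (hc : ∀ n, ‖taylorCoeff f z n‖ ≤ C * a ^ n) (ha : 0 ≤ a) (hρ : 0 < ρ) (hρa : ρ * a ≤ 1) :
    EqOn f (fun x => ofScalarsSum (taylorCoeff f z) (x - z)) (V ∩ ball z ρ) := by
  obtain ⟨δ, hδ, hδV⟩ := Metric.isOpen_iff.1 hV z hz
  have hnear : f =ᶠ[𝓝 z] fun x => ofScalarsSum (taylorCoeff f z) (x - z) := by
    filter_upwards [ball_mem_nhds z hδ] with x hx
    simp only [ofScalars_sum_eq, smul_eq_mul, taylorCoeff]
    exact (taylorSeries_eq_on_ball' hx (hf.mono hδV)).symm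
  exact ((hf.analyticOnNhd hV).mono inter_subset_left).eqOn_of_preconnected_of_eventuallyEq
    ((analyticOnNhd_ofScalarsSum_sub hc ha hρ hρa z).mono inter_subset_right)
    (hVc.inter (convex_ball z ρ)).isPreconnected ⟨hz, mem_ball_self hρ⟩ hnear

theorem eventuallyEq_ofScalarsSum_taylorCoeff_nhdsSet_closedBall {f : ℂ → ℂ} {U : Set ℂ}
    {m z : ℂ} {R ρ C a : ℝ} (hf : DifferentiableOn ℂ f U) (hU : IsOpen U)
    (hsub : closedBall m R ⊆ U) (hz : z ∈ closedBall m R)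
    (hc : ∀ n, ‖taylorCoeff f z n‖ ≤ C * a ^ n) (ha : 0 ≤ a) (hρ : R + dist m z < ρ)
    (hρa : ρ * a ≤ 1) :
    f =ᶠ[𝓝ˢ (closedBall m R)] fun x => ofScalarsSum (taylorCoeff f z) (x - z) := by
  have hR := nonneg_of_mem_closedBall hz
  obtain ⟨ε, hε, hεU⟩ := exists_ball_subset_of_closedBall_subset hU hR hsub
  have hV : closedBall m R ⊆ ball m (R + ε) ∩ ball z ρ :=
    subset_inter (closedBall_subset_ball (by linarith)) (closedBall_subset_ball' hρ)
  refine ((hf.mono hεU).eqOn_ofScalarsSum_taylorCoeff isOpen_ball (convex_ball _ _)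
    (closedBall_subset_ball (by linarith) hz) hc ha (by linarith [dist_nonneg (x := m) (y := z)])
    hρa).eventuallyEq_of_mem ?_
  exact (isOpen_ball.inter isOpen_ball).mem_nhdsSet.2 hV

section Gamma

variable {f : ℂ → ℂ} {z : ℂ} {γ : ℝ}

theorem nonneg_of_mem_upperBounds_gammaSet (hγ : γ ∈ upperBounds (gammaSet f z)) : 0 ≤ γ :=
  (Real.rpow_nonneg (norm_nonneg _) _).trans (hγ ⟨1, le_rfl, rfl⟩)

theorem norm_taylorCoeff_le_of_mem_upperBounds_gammaSet (hfz : f z ≠ 0)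
    (hγ : γ ∈ upperBounds (gammaSet f z)) (n : ℕ) : ‖taylorCoeff f z n‖ ≤ ‖f z‖ * γ ^ n := by
  rcases n.eq_zero_or_pos with rfl | hn
  · simp [taylorCoeff_zero]
  have hq : ‖iteratedDeriv n f z / (n ! * f z)‖ ≤ γ ^ n := by
    have h := pow_le_pow_left₀ (by positivity) (hγ ⟨n, hn, rfl⟩) n
    rwa [one_div, Real.rpow_inv_natCast_pow (norm_nonneg _) hn.ne'] at h
  calc ‖taylorCoeff f z n‖ = ‖f z‖ * ‖iteratedDeriv n f z / (n ! * f z)‖ := by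
        rw [taylorCoeff, ← norm_mul]; congr 1; field_simp
    _ ≤ ‖f z‖ * γ ^ n := by gcongr

end Gamma

theorem norm_sub_le_and_norm_deriv_le_of_mem_upperBounds_gammaSet {f : ℂ → ℂ} {U : Set ℂ}
    {m z : ℂ} {r γ : ℝ} (hr : 0 < r) (hU : IsOpen U) (hsub : closedBall m (2 * r) ⊆ U)
    (hf : DifferentiableOn ℂ f U) (hz : z ∈ ball m r) (hfz : f z ≠ 0)
    (hγ : γ ∈ upperBounds (gammaSet f z)) (hγr : 2 ^ 7 * γ * r ≤ 1) (w : ℂ)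
    (hw : w ∈ closedBall m (2 * r)) :
    ‖f w - f z‖ ≤ ‖f z‖ / 31 ∧ ‖deriv f w‖ ≤ ‖f z‖ / 31 / r := by
  have hc := norm_taylorCoeff_le_of_mem_upperBounds_gammaSet hfz hγ
  have hγ0 := nonneg_of_mem_upperBounds_gammaSet hγ
  set g := fun x => ofScalarsSum (taylorCoeff f z) (x - z)
  have hg : AnalyticOnNhd ℂ g (ball z (4 * r)) :=
    analyticOnNhd_ofScalarsSum_sub hc hγ0 (by positivity) (by linarith) z
  have hg_close : ∀ x ∈ ball z (4 * r), ‖g x - f z‖ ≤ ‖f z‖ / 31 := by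
    intro x hx
    have hx' : ‖x - z‖ * γ ≤ 1 / 32 := by nlinarith [mem_ball_iff_norm.1 hx]
    have h := norm_ofScalarsSum_sub_coeff_zero_le hc hγ0 hx' (by norm_num)
    rw [taylorCoeff_zero] at h
    linarith
  have hmz := mem_ball'.1 hz
  have hfg : f =ᶠ[𝓝ˢ (closedBall m (2 * r))] g :=
    eventuallyEq_ofScalarsSum_taylorCoeff_nhdsSet_closedBall hf hU hsub
      (closedBall_subset_closedBall (by linarith) (ball_subset_closedBall hz)) hc hγ0
      (ρ := 4 * r) (by linarith) (by linarith)
  have hfg_w : f =ᶠ[𝓝 w] g := hfg.filter_mono (nhds_le_nhdsSet hw)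
  have hwz : r + dist w z < 4 * r := by
    linarith [mem_closedBall.1 hw, dist_triangle w m z]
  constructor
  · rw [hfg_w.eq_of_nhds]
    exact hg_close w (mem_ball.2 (by linarith))
  · rw [hfg_w.deriv_eq]
    exact norm_deriv_le_of_forall_norm_sub_le hg.differentiableOn hr
      (closedBall_subset_ball' hwz) hg_close

theorem stmt19_general (f : ℂ → ℂ) (m : ℂ) (r : ℝ) (hr : 0 < r) (U : Set ℂ) (hU : IsOpen U)
    (hsub : closedBall m (2*r) ⊆ U) (hf : DifferentiableOn ℂ f U)
    (hex : ∃ z ∈ ball m r, f z ≠ 0 ∧ ∃ γ, IsLUB (gammaSet f z) γ ∧ 2^7 * γ * r ≤ 1) :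
    6 * r * sSup ((fun w => ‖deriv f w‖) '' closedBall m (2*r)) ≤ ‖f m‖ ∧
      ∀ w ∈ ball m r, f w ≠ 0 := by
  obtain ⟨z, hz, hfz, γ, hγ, hγr⟩ := hex
  have hest :=
    norm_sub_le_and_norm_deriv_le_of_mem_upperBounds_gammaSet hr hU hsub hf hz hfz hγ.1 hγr
  have hf_lower : ∀ w ∈ closedBall m (2 * r), 30 / 31 * ‖f z‖ ≤ ‖f w‖ := fun w hw => by
    linarith [(hest w hw).1, norm_sub_norm_le (f z) (f w), norm_sub_rev (f z) (f w)]
  refine ⟨?_, fun w hw hw0 => ?_⟩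
  · have hS := Real.sSup_le (forall_mem_image.2 fun w hw => (hest w hw).2) (by positivity)
    calc 6 * r * sSup ((fun w => ‖deriv f w‖) '' closedBall m (2 * r))
        ≤ 6 * r * (‖f z‖ / 31 / r) := by gcongr
      _ = 6 / 31 * ‖f z‖ := by field_simp
      _ ≤ ‖f m‖ := by linarith [hf_lower m (mem_closedBall_self (by positivity)), norm_nonneg (f z)]
  · have := hf_lower w (closedBall_subset_closedBall (by linarith) (ball_subset_closedBall hw))
    rw [hw0, norm_zero] at this
    linarith [norm_pos_iff.2 hfz]

theorem stmt19 (f : ℂ → ℂ) (m : ℂ) (r : ℝ) (hr : 0 < r) (U : Set ℂ) (hU : IsOpen U)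
    (hsub : closedBall m (2*r) ⊆ U) (hf : DifferentiableOn ℂ f U) (hm : f m ≠ 0)
    (hex : ∃ z ∈ ball m r, f z ≠ 0 ∧ ∃ γ, IsLUB (gammaSet f z) γ ∧ 2^7 * γ * r ≤ 1) :
    6 * r * sSup ((fun w => ‖deriv f w‖) '' closedBall m (2*r)) ≤ ‖f m‖ ∧
      ∀ w ∈ ball m r, f w ≠ 0 :=
  stmt19_general f m r hr U hU hsub hf hex
end
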